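/- Let m₁, m₂ ≥ 1, set m = max(m₁,m₂), and let (μ¹,μ²), (ν¹,ν²) ∈ M(m₁,m₂); set μ = μ¹ − μ² and ν = ν¹ − ν². Then for every function f : ℝ^d → ℝ with ‖f‖_L ≤ 1 one has (∫ f dμ − ∫ f dν)² ≤ 2m² · γ_2((μ¹,μ²),(ν¹,ν²))²; consequently sup_{f : ‖f‖_L ≤ 1} (∫ f dμ − ∫ f dν)² ≤ 2m² · γ_2((μ¹,μ²),(ν¹,ν²))². -/

import Mathlib

open MeasureTheory Set Filter

noncomputable section

/-- `ℝ^d` with the Euclidean norm. -/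
abbrev Euc (d : ℕ) := EuclideanSpace ℝ (Fin d)

/-- The bounded metric `ρ(x,y) = min (1, ‖x - y‖)`. -/
def rho {d : ℕ} (x y : Euc d) : ℝ := min 1 (dist x y)

/-- `M(m)`: finite nonnegative Borel measures on `ℝ^d` with total mass `m`. -/
def Mset (d : ℕ) (m : ℝ) : Set (Measure (Euc d)) :=
  {μ | μ Set.univ = ENNReal.ofReal m}

/-- `H(μ,ν)`: joint representations of the pair `(μ,ν)`, where `μ, ν ∈ M(m)`. -/
def Hrep {d : ℕ} (m : ℝ) (μ ν : Measure (Euc d)) : Set (Measure (Euc d × Euc d)) :=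
  {Q | ∀ A : Set (Euc d), MeasurableSet A →
      Q (A ×ˢ Set.univ) = ENNReal.ofReal m * μ A ∧
      Q (Set.univ ×ˢ A) = ENNReal.ofReal m * ν A}

/-- The Wasserstein distance `W_p` on `M(m)` associated with the metric `ρ`. -/
def Wp {d : ℕ} (p m : ℝ) (μ ν : Measure (Euc d)) : ℝ :=
  sInf ((fun Q : Measure (Euc d × Euc d) => ∫ z, rho z.1 z.2 ^ p ∂Q) '' Hrep m μ ν) ^ (1 / p)

/-- The metric `γ_p` on `M(m₁,m₂) = M(m₁) × M(m₂)`. -/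
def gammap {d : ℕ} (p m₁ m₂ : ℝ) (x y : Measure (Euc d) × Measure (Euc d)) : ℝ :=
  (Wp p m₁ x.1 y.1 ^ p + Wp p m₂ x.2 y.2 ^ p) ^ (1 / p)

/-!
For a coupling `Q ∈ H(μ,ν)` of two measures of mass `m > 0`, `Q` has total mass `m²` and
`m (∫ f dμ - ∫ f dν) = ∫ (f x - f y) dQ(x,y)`. If `f` is `1`-Lipschitz for `ρ`, the Cauchy–Schwarz
inequality bounds the right-hand side by `m (∫ ρ² dQ)^{1/2}`, so `(∫ f dμ - ∫ f dν)² ≤ W_2(μ,ν)²`.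
Applying this to both components and using `(a - b)² ≤ 2 (a² + b²)` and `max m₁ m₂ ≥ 1` gives
the claim.
-/

theorem sq_integral_le_measureReal_univ_mul_integral_sq {α : Type*} [MeasurableSpace α]
    {μ : Measure α} [IsFiniteMeasure μ] {g : α → ℝ} (hg : Integrable g μ)
    (hg2 : Integrable (fun x => g x ^ 2) μ) :
    (∫ x, g x ∂μ) ^ 2 ≤ μ.real univ * ∫ x, g x ^ 2 ∂μ := by
  rcases eq_zero_or_neZero μ with rfl | _
  · simp
  have jensen : (⨍ x, g x ∂μ) ^ 2 ≤ ⨍ x, g x ^ 2 ∂μ :=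
    (even_two.convexOn_pow (𝕜 := ℝ)).map_average_le (continuous_pow 2).continuousOn
      isClosed_univ (by simp) hg hg2
  rw [← measure_smul_average μ g, ← measure_smul_average μ (fun x => g x ^ 2), smul_eq_mul,
    smul_eq_mul, mul_pow, sq, mul_assoc]
  gcongr

section Rho

variable {d : ℕ}

lemma rho_nonneg (x y : Euc d) : 0 ≤ rho x y := le_min zero_le_one dist_nonneg

lemma rho_le_one (x y : Euc d) : rho x y ≤ 1 := min_le_left _ _

lemma continuous_rho : Continuous fun z : Euc d × Euc d => rho z.1 z.2 :=
  continuous_const.min (continuous_fst.dist continuous_snd)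

lemma integrable_rho {Q : Measure (Euc d × Euc d)} [IsFiniteMeasure Q] :
    Integrable (fun z => rho z.1 z.2) Q :=
  .of_bound continuous_rho.aestronglyMeasurable 1 (ae_of_all _ fun z => by
    rw [Real.norm_eq_abs, abs_of_nonneg (rho_nonneg _ _)]; exact rho_le_one _ _)

lemma integrable_rho_sq {Q : Measure (Euc d × Euc d)} [IsFiniteMeasure Q] :
    Integrable (fun z => rho z.1 z.2 ^ 2) Q :=
  .of_bound (continuous_rho.pow 2).aestronglyMeasurable 1 (ae_of_all _ fun z => by
    rw [Real.norm_eq_abs, abs_of_nonneg (sq_nonneg _)]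
    exact pow_le_one₀ (rho_nonneg _ _) (rho_le_one _ _))

variable {f : Euc d → ℝ}

lemma continuous_of_abs_sub_le_rho (hf : ∀ a b, |f a - f b| ≤ rho a b) : Continuous f :=
  LipschitzWith.continuous (K := 1) <| LipschitzWith.of_dist_le_mul fun a b => by
    simpa [Real.dist_eq] using (hf a b).trans (min_le_right _ _)

lemma integrable_comp_of_abs_sub_le_rho {α : Type*} [MeasurableSpace α] {μ : Measure α}
    [IsFiniteMeasure μ] {φ : α → Euc d} (hφ : Measurable φ)
    (hf : ∀ a b, |f a - f b| ≤ rho a b) : Integrable (fun x => f (φ x)) μ := by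
  refine .of_bound ((continuous_of_abs_sub_le_rho hf).measurable.comp hφ).aestronglyMeasurable
    (|f 0| + 1) (ae_of_all _ fun x => ?_)
  have hclose := (hf (φ x) 0).trans (rho_le_one _ _)
  rw [Real.norm_eq_abs]
  linarith [abs_sub_abs_le_abs_sub (f (φ x)) (f 0)]

end Rho

section Couplings

variable {d : ℕ} {m : ℝ} {μ ν : Measure (Euc d)} {Q : Measure (Euc d × Euc d)}

lemma isFiniteMeasure_of_mem_Mset (hμ : μ ∈ Mset d m) : IsFiniteMeasure μ :=
  ⟨hμ.trans_lt ENNReal.ofReal_lt_top⟩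

lemma eq_zero_of_mem_Mset_of_nonpos (hμ : μ ∈ Mset d m) (hm : m ≤ 0) : μ = 0 :=
  Measure.measure_univ_eq_zero.mp (hμ.trans (ENNReal.ofReal_eq_zero.mpr hm))

lemma prod_mem_Hrep (hμ : μ ∈ Mset d m) (hν : ν ∈ Mset d m) : μ.prod ν ∈ Hrep m μ ν := by
  have := isFiniteMeasure_of_mem_Mset hν
  intro A _
  rw [Measure.prod_prod, Measure.prod_prod, hμ, hν, mul_comm]
  exact ⟨rfl, rfl⟩

lemma map_fst_of_mem_Hrep (hQ : Q ∈ Hrep m μ ν) : Q.map Prod.fst = ENNReal.ofReal m • μ := by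
  ext A hA
  rw [Measure.map_apply measurable_fst hA, ← prod_univ]
  exact (hQ A hA).1

lemma map_snd_of_mem_Hrep (hQ : Q ∈ Hrep m μ ν) : Q.map Prod.snd = ENNReal.ofReal m • ν := by
  ext A hA
  rw [Measure.map_apply measurable_snd hA, ← univ_prod]
  exact (hQ A hA).2

lemma measure_univ_of_mem_Hrep (hμ : μ ∈ Mset d m) (hQ : Q ∈ Hrep m μ ν) :
    Q univ = ENNReal.ofReal m * ENNReal.ofReal m := by
  rw [← univ_prod_univ, (hQ univ MeasurableSet.univ).1, hμ]

lemma integral_comp_fst_of_mem_Hrep (hm : 0 ≤ m) (hQ : Q ∈ Hrep m μ ν) {f : Euc d → ℝ}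
    (hf : StronglyMeasurable f) : ∫ z, f z.1 ∂Q = m * ∫ x, f x ∂μ := by
  rw [← integral_map measurable_fst.aemeasurable hf.aestronglyMeasurable,
    map_fst_of_mem_Hrep hQ, integral_smul_measure, ENNReal.toReal_ofReal hm, smul_eq_mul]

lemma integral_comp_snd_of_mem_Hrep (hm : 0 ≤ m) (hQ : Q ∈ Hrep m μ ν) {f : Euc d → ℝ}
    (hf : StronglyMeasurable f) : ∫ z, f z.2 ∂Q = m * ∫ x, f x ∂ν := by
  rw [← integral_map measurable_snd.aemeasurable hf.aestronglyMeasurable,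
    map_snd_of_mem_Hrep hQ, integral_smul_measure, ENNReal.toReal_ofReal hm, smul_eq_mul]

lemma isFiniteMeasure_of_mem_Hrep (hμ : μ ∈ Mset d m) (hQ : Q ∈ Hrep m μ ν) :
    IsFiniteMeasure Q :=
  ⟨(measure_univ_of_mem_Hrep hμ hQ).trans_lt
    (ENNReal.mul_lt_top ENNReal.ofReal_lt_top ENNReal.ofReal_lt_top)⟩

lemma mul_integral_sub_eq_integral_of_mem_Hrep [IsFiniteMeasure Q] (hm : 0 ≤ m)
    (hQ : Q ∈ Hrep m μ ν) {f : Euc d → ℝ} (hf : ∀ a b, |f a - f b| ≤ rho a b) :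
    m * (∫ x, f x ∂μ - ∫ x, f x ∂ν) = ∫ z, (f z.1 - f z.2) ∂Q := by
  have hfm := (continuous_of_abs_sub_le_rho hf).stronglyMeasurable
  rw [integral_sub (integrable_comp_of_abs_sub_le_rho measurable_fst hf)
    (integrable_comp_of_abs_sub_le_rho measurable_snd hf),
    integral_comp_fst_of_mem_Hrep hm hQ hfm, integral_comp_snd_of_mem_Hrep hm hQ hfm, mul_sub]

theorem sq_integral_sub_le_integral_rho_sq_of_mem_Hrep (hμ : μ ∈ Mset d m)
    (hν : ν ∈ Mset d m) (hQ : Q ∈ Hrep m μ ν) {f : Euc d → ℝ}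
    (hf : ∀ a b, |f a - f b| ≤ rho a b) :
    (∫ x, f x ∂μ - ∫ x, f x ∂ν) ^ 2 ≤ ∫ z, rho z.1 z.2 ^ 2 ∂Q := by
  have hρ2 : 0 ≤ ∫ z, rho z.1 z.2 ^ 2 ∂Q := integral_nonneg fun z => sq_nonneg _
  rcases le_or_gt m 0 with hm | hm
  · simpa [eq_zero_of_mem_Mset_of_nonpos hμ hm, eq_zero_of_mem_Mset_of_nonpos hν hm] using hρ2
  have := isFiniteMeasure_of_mem_Hrep hμ hQ
  have hQ_real : Q.real univ = m ^ 2 := by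
    rw [measureReal_def, measure_univ_of_mem_Hrep hμ hQ, ENNReal.toReal_mul,
      ENNReal.toReal_ofReal hm.le, sq]
  have habs : |∫ z, (f z.1 - f z.2) ∂Q| ≤ ∫ z, rho z.1 z.2 ∂Q :=
    (abs_integral_le_integral_abs).trans (integral_mono_of_nonneg
      (ae_of_all _ fun _ => abs_nonneg _) integrable_rho (ae_of_all _ fun z => hf z.1 z.2))
  have hmain : m ^ 2 * (∫ x, f x ∂μ - ∫ x, f x ∂ν) ^ 2 ≤ m ^ 2 * ∫ z, rho z.1 z.2 ^ 2 ∂Q :=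
    calc m ^ 2 * (∫ x, f x ∂μ - ∫ x, f x ∂ν) ^ 2 = |∫ z, (f z.1 - f z.2) ∂Q| ^ 2 := by
          rw [sq_abs, ← mul_integral_sub_eq_integral_of_mem_Hrep hm.le hQ hf, mul_pow]
      _ ≤ (∫ z, rho z.1 z.2 ∂Q) ^ 2 := pow_le_pow_left₀ (abs_nonneg _) habs 2
      _ ≤ m ^ 2 * ∫ z, rho z.1 z.2 ^ 2 ∂Q :=
          hQ_real ▸ sq_integral_le_measureReal_univ_mul_integral_sq integrable_rho integrable_rho_sq
  exact le_of_mul_le_mul_left hmain (by positivity)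

lemma sq_Wp_two (m : ℝ) (μ ν : Measure (Euc d)) :
    Wp 2 m μ ν ^ 2 = sInf ((fun Q : Measure (Euc d × Euc d) => ∫ z, rho z.1 z.2 ^ 2 ∂Q) ''
      Hrep m μ ν) := by
  simp only [Wp, Real.rpow_two]
  rw [← Real.sqrt_eq_rpow, Real.sq_sqrt]
  exact Real.sInf_nonneg (by
    rintro _ ⟨Q, -, rfl⟩
    exact integral_nonneg fun z => sq_nonneg _)

theorem sq_integral_sub_le_sq_Wp_two (hμ : μ ∈ Mset d m) (hν : ν ∈ Mset d m) {f : Euc d → ℝ}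
    (hf : ∀ a b, |f a - f b| ≤ rho a b) :
    (∫ x, f x ∂μ - ∫ x, f x ∂ν) ^ 2 ≤ Wp 2 m μ ν ^ 2 := by
  rw [sq_Wp_two]
  refine le_csInf ⟨_, mem_image_of_mem _ (prod_mem_Hrep hμ hν)⟩ ?_
  rintro _ ⟨Q, hQ, rfl⟩
  exact sq_integral_sub_le_integral_rho_sq_of_mem_Hrep hμ hν hQ hf

end Couplings

lemma sq_gammap_two {d : ℕ} (m₁ m₂ : ℝ) (x y : Measure (Euc d) × Measure (Euc d)) :
    gammap 2 m₁ m₂ x y ^ 2 = Wp 2 m₁ x.1 y.1 ^ 2 + Wp 2 m₂ x.2 y.2 ^ 2 := by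
  simp only [gammap, Real.rpow_two]
  rw [← Real.sqrt_eq_rpow, Real.sq_sqrt (by positivity)]

theorem sq_integral_sub_le_gamma2_general {d : ℕ} (m₁ m₂ : ℝ)
    (hm₁ : 1 ≤ m₁)
    (μ1 μ2 ν1 ν2 : Measure (Euc d))
    (hμ1 : μ1 ∈ Mset d m₁) (hν1 : ν1 ∈ Mset d m₁)
    (hμ2 : μ2 ∈ Mset d m₂) (hν2 : ν2 ∈ Mset d m₂) :
    (∀ f : Euc d → ℝ, (∀ a b : Euc d, |f a - f b| ≤ rho a b) →
      ((∫ x, f x ∂μ1 - ∫ x, f x ∂μ2) - (∫ x, f x ∂ν1 - ∫ x, f x ∂ν2)) ^ 2 ≤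
        2 * max m₁ m₂ ^ 2 * gammap 2 m₁ m₂ (μ1, μ2) (ν1, ν2) ^ 2) ∧
    sSup {r : ℝ | ∃ f : Euc d → ℝ, (∀ a b : Euc d, |f a - f b| ≤ rho a b) ∧
        r = ((∫ x, f x ∂μ1 - ∫ x, f x ∂μ2) - (∫ x, f x ∂ν1 - ∫ x, f x ∂ν2)) ^ 2} ≤
      2 * max m₁ m₂ ^ 2 * gammap 2 m₁ m₂ (μ1, μ2) (ν1, ν2) ^ 2 := by
  have hmax : 1 ≤ max m₁ m₂ ^ 2 := one_le_pow₀ (le_max_of_le_left hm₁)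
  have bound : ∀ f : Euc d → ℝ, (∀ a b : Euc d, |f a - f b| ≤ rho a b) →
      ((∫ x, f x ∂μ1 - ∫ x, f x ∂μ2) - (∫ x, f x ∂ν1 - ∫ x, f x ∂ν2)) ^ 2 ≤
        2 * max m₁ m₂ ^ 2 * gammap 2 m₁ m₂ (μ1, μ2) (ν1, ν2) ^ 2 := by
    intro f hf
    set u := ∫ x, f x ∂μ1 - ∫ x, f x ∂ν1
    set v := ∫ x, f x ∂μ2 - ∫ x, f x ∂ν2
    have hu : u ^ 2 ≤ Wp 2 m₁ μ1 ν1 ^ 2 := sq_integral_sub_le_sq_Wp_two hμ1 hν1 hf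
    have hv : v ^ 2 ≤ Wp 2 m₂ μ2 ν2 ^ 2 := sq_integral_sub_le_sq_Wp_two hμ2 hν2 hf
    rw [sq_gammap_two]
    calc ((∫ x, f x ∂μ1 - ∫ x, f x ∂μ2) - (∫ x, f x ∂ν1 - ∫ x, f x ∂ν2)) ^ 2 = (u - v) ^ 2 := by
          ring
      _ ≤ 2 * (u ^ 2 + v ^ 2) := by nlinarith [sq_nonneg (u + v)]
      _ ≤ 2 * (Wp 2 m₁ μ1 ν1 ^ 2 + Wp 2 m₂ μ2 ν2 ^ 2) := by gcongr
      _ ≤ 2 * max m₁ m₂ ^ 2 * (Wp 2 m₁ μ1 ν1 ^ 2 + Wp 2 m₂ μ2 ν2 ^ 2) := by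
          rw [mul_assoc]
          gcongr
          exact le_mul_of_one_le_left (by positivity) hmax
  refine ⟨bound, Real.sSup_le ?_ (by positivity)⟩
  rintro _ ⟨f, hf, rfl⟩
  exact bound f hf

/-- for `f` with minimal Lipschitz constant (w.r.t. `ρ`) at most 1,
`<μ−ν, f>² ≤ 2m²·γ_2((μ¹,μ²),(ν¹,ν²))²`, where `μ = μ¹ − μ²`, `ν = ν¹ − ν²` and
`m = max(m₁,m₂)`; consequently the same bound holds for the supremum over all such `f`. -/
theorem sq_integral_sub_le_gamma2 {d : ℕ} (hd : 1 ≤ d) (m₁ m₂ : ℝ)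
    (hm₁ : 1 ≤ m₁) (hm₂ : 1 ≤ m₂)
    (μ1 μ2 ν1 ν2 : Measure (Euc d))
    (hμ1 : μ1 ∈ Mset d m₁) (hν1 : ν1 ∈ Mset d m₁)
    (hμ2 : μ2 ∈ Mset d m₂) (hν2 : ν2 ∈ Mset d m₂) :
    (∀ f : Euc d → ℝ, (∀ a b : Euc d, |f a - f b| ≤ rho a b) →
      ((∫ x, f x ∂μ1 - ∫ x, f x ∂μ2) - (∫ x, f x ∂ν1 - ∫ x, f x ∂ν2)) ^ 2 ≤
        2 * max m₁ m₂ ^ 2 * gammap 2 m₁ m₂ (μ1, μ2) (ν1, ν2) ^ 2) ∧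
    sSup {r : ℝ | ∃ f : Euc d → ℝ, (∀ a b : Euc d, |f a - f b| ≤ rho a b) ∧
        r = ((∫ x, f x ∂μ1 - ∫ x, f x ∂μ2) - (∫ x, f x ∂ν1 - ∫ x, f x ∂ν2)) ^ 2} ≤
      2 * max m₁ m₂ ^ 2 * gammap 2 m₁ m₂ (μ1, μ2) (ν1, ν2) ^ 2 :=
  sq_integral_sub_le_gamma2_general m₁ m₂ hm₁ μ1 μ2 ν1 ν2 hμ1 hν1 hμ2 hν2
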